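/- Let 𝒞 be a nowhere dense class of finite graphs and let r ∈ ℕ. Then there exists an integer c(r) such that for every graph G ∈ 𝒞, both of the following families of subsets of V(G) have VC-dimension at most c(r): the family {N_r[v] : v ∈ V(G)} of closed balls of radius r, and the family {{v} ∪ {u ∈ V(G) : dist_G(u,v) = r} : v ∈ V(G)} of exact-distance-r spheres together with their centers. -/

import Mathlib

open SimpleGraph

/-- A finite simple graph: a bundled finite vertex type together with a simple graph on it. -/
structure FinGraph : Type 1 where
  V : Type
  fintypeV : Fintype V
  graph : SimpleGraph V

attribute [instance] FinGraph.fintypeV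

/-- The set `S` induces a subgraph of `G` of radius at most `r`:
there is a center `c ∈ S` from which every vertex of `S` is at distance at most `r`
inside the subgraph induced by `S`. -/
def hasRadiusLE {V : Type} (G : SimpleGraph V) (S : Set V) (r : ℕ) : Prop :=
  ∃ c : S, ∀ x : S, (G.induce S).edist c x ≤ (r : ℕ∞)

/-- `H` is a depth-`r` minor of `G`: there is a minor model of `H` in `G` with
pairwise disjoint connected branch sets of radius at most `r`. -/
def IsDepthMinor {W V : Type} (r : ℕ) (H : SimpleGraph W) (G : SimpleGraph V) : Prop :=
  ∃ I : W → Set V,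
    (∀ u, hasRadiusLE G (I u) r) ∧
    (Pairwise fun u v => Disjoint (I u) (I v)) ∧
    (∀ u v, H.Adj u v → ∃ a ∈ I u, ∃ b ∈ I v, G.Adj a b)

/-- A class of finite graphs is nowhere dense if there is `f : ℕ → ℕ` such that
`K_{f r}` is not a depth-`r` minor of any member, for every `r`. -/
def NowhereDense (C : Set FinGraph) : Prop :=
  ∃ f : ℕ → ℕ, ∀ r : ℕ, ∀ G ∈ C, ¬ IsDepthMinor r (completeGraph (Fin (f r))) G.graph

/-- `H` is (isomorphic to) a subgraph of `G`. -/
def IsSubgraphOf (H G : FinGraph) : Prop :=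
  ∃ f : H.V ↪ G.V, ∀ u v, H.graph.Adj u v → G.graph.Adj (f u) (f v)

/-- A class of graphs is monotone if it is closed under taking subgraphs. -/
def MonotoneClass (C : Set FinGraph) : Prop :=
  ∀ G ∈ C, ∀ H : FinGraph, IsSubgraphOf H G → H ∈ C

/-- The closed ball of radius `r` around `v`: `N_r[v]`. -/
def ball {V : Type} (G : SimpleGraph V) (r : ℕ) (v : V) : Set V :=
  {u | G.edist u v ≤ (r : ℕ∞)}

/-- The `r`-neighborhood complexity `ν_r(G,A)`. -/
noncomputable def nu {V : Type} (G : SimpleGraph V) (r : ℕ) (A : Set V) : ℕ :=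
  {S : Set V | ∃ v : V, S = ball G r v ∩ A}.ncard

/-- The value of the `r`-distance profile of `u` at `x`:
`dist_G(u,x)` if it is at most `r`, and `∞` otherwise. -/
noncomputable def profVal {V : Type} (G : SimpleGraph V) (r : ℕ) (u x : V) : ℕ∞ :=
  if G.edist u x ≤ (r : ℕ∞) then G.edist u x else ⊤

/-- The distance profile complexity `ν̂_r(G,A)`: the number of distinct
`r`-distance profiles `π_r[u,A] : A → {0,…,r,∞}` over `u ∈ V(G)`. -/
noncomputable def nuHat {V : Type} (G : SimpleGraph V) (r : ℕ) (A : Set V) : ℕ :=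
  {f : ↥A → ℕ∞ | ∃ u : V, f = fun x : ↥A => profVal G r u ↑x}.ncard

/-- A family `F` of subsets shatters `X` if every subset of `X` is an intersection of
`X` with a member of `F`. -/
def Shatters {U : Type} (F : Set (Set U)) (X : Set U) : Prop :=
  ∀ Y ⊆ X, ∃ S ∈ F, X ∩ S = Y

/-- The family `F` has VC-dimension at most `d`. -/
def VCDimLE {U : Type} (F : Set (Set U)) (d : ℕ) : Prop :=
  ∀ X : Set U, Shatters F X → X.ncard ≤ d

/-- `WReach_r[G,L,v]`: the set of vertices weakly `r`-reachable from `v` with respect to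
the linear order `L`: vertices `u` joined to `v` by a path of length at most `r` on which
`u` is the `L`-least vertex. -/
def WReach {V : Type} (G : SimpleGraph V) (L : LinearOrder V) (r : ℕ) (v : V) : Set V :=
  {u | ∃ p : G.Walk u v, p.IsPath ∧ p.length ≤ r ∧ ∀ x ∈ p.support, L.le u x}

/-- `B` is `r`-independent in `G`: distinct vertices of `B` are at distance more than `r`. -/
def RIndep {V : Type} (G : SimpleGraph V) (r : ℕ) (B : Set V) : Prop :=
  ∀ u ∈ B, ∀ v ∈ B, u ≠ v → (r : ℕ∞) < G.edist u v

/-- The length of a shortest `A`-avoiding path from `u` to `v`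
(all vertices except possibly `v` lie outside `A`); `∞` if there is none. -/
noncomputable def avoidDist {V : Type} (G : SimpleGraph V) (A : Set V) (u v : V) : ℕ∞ :=
  sInf {n : ℕ∞ | ∃ p : G.Walk u v, p.IsPath ∧ (∀ x ∈ p.support, x ≠ v → x ∉ A) ∧ (p.length : ℕ∞) = n}

/-- The value of the `r`-projection profile `ρ_r[u,A]` at `v`. -/
noncomputable def projProfVal {V : Type} (G : SimpleGraph V) (r : ℕ) (A : Set V) (u v : V) : ℕ∞ :=
  if avoidDist G A u v ≤ (r : ℕ∞) then avoidDist G A u v else ⊤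

/-- The `r`-projection `M_r(u,A)` of `u` on `A`. -/
def Mproj {V : Type} (G : SimpleGraph V) (r : ℕ) (A : Set V) (u : V) : Set V :=
  {v ∈ A | avoidDist G A u v ≤ (r : ℕ∞)}

/-- The projection profile complexity `μ̂_r(G,A)`: the number of distinct
`r`-projection profiles `ρ_r[u,A]` over `u ∈ V(G) ∖ A`. -/
noncomputable def muHat {V : Type} (G : SimpleGraph V) (r : ℕ) (A : Set V) : ℕ :=
  {f : ↥A → ℕ∞ | ∃ u : V, u ∉ A ∧ f = fun v : ↥A => projProfVal G r A u ↑v}.ncard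

/-- `D` is a `(Z,r)`-dominator in `G`: every vertex of `Z` is at distance at most `r`
from some vertex of `D`. -/
def IsDominator {V : Type} (G : SimpleGraph V) (r : ℕ) (Z D : Set V) : Prop :=
  ∀ z ∈ Z, ∃ d ∈ D, G.edist z d ≤ (r : ℕ∞)

/-- `D` is a minimum-size `(Z,r)`-dominator in `G`. -/
def IsMinDominator {V : Type} (G : SimpleGraph V) (r : ℕ) (Z D : Set V) : Prop :=
  IsDominator G r Z D ∧ ∀ D' : Set V, IsDominator G r Z D' → D.ncard ≤ D'.ncard

/-- `Z` is an `r`-domination core of `G`: every minimum-size `(Z,r)`-dominator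
is an `r`-dominating set of `G`. -/
def IsDomCore {V : Type} (G : SimpleGraph V) (r : ℕ) (Z : Set V) : Prop :=
  ∀ D : Set V, IsMinDominator G r Z D → IsDominator G r Set.univ D

/-- `ds_r(G,Z)`: the minimum size of a `(Z,r)`-dominator in `G`. -/
noncomputable def dsr {V : Type} (G : SimpleGraph V) (r : ℕ) (Z : Set V) : ℕ :=
  sInf {n : ℕ | ∃ D : Set V, IsDominator G r Z D ∧ D.ncard = n}

/-!
Balls: if `X` is shattered by the `r`-balls, pick for each pair `x i ≠ x j` of points of `X` a
centre `w` whose `r`-ball meets `X` exactly in `{x i, x j}`. The Voronoi cells of the points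
`x i`, truncated at radius `r`, are then the branch sets of a depth-`r` minor of a complete graph
on `X`: a geodesic from `x i` through `w` to `x j` only passes through the cells of `x i` and
`x j`, since a vertex on it at least as close to a third point `x k` would put `x k` within
distance `r` of `w`.

Spheres: a sphere with its centre is `N_r[v] \ N_{r-1}[v] ∪ {v}`, so its trace on a set `X` of
size `n` is determined by traces of three families of bounded VC-dimension. By the Sauer–Shelah
lemma there are only polynomially many of these, fewer than `2 ^ n` once `n` is large.
-/

open scoped Finset
open Filter

theorem SimpleGraph.Adj.edist_le_edist_add_one {V : Type} {G : SimpleGraph V} {u z : V}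
    (h : G.Adj u z) (w : V) : G.edist u w ≤ G.edist z w + 1 :=
  calc G.edist u w ≤ G.edist u z + G.edist z w := G.edist_triangle
    _ = G.edist z w + 1 := by rw [edist_eq_one_iff_adj.2 h, add_comm]

theorem SimpleGraph.Walk.edist_add_edist_le_length {V : Type} {G : SimpleGraph V} {a b u : V}
    (p : G.Walk a b) (hu : u ∈ p.support) : G.edist a u + G.edist u b ≤ p.length := by
  classical
  have h := congrArg Walk.length (p.take_spec hu)
  rw [Walk.length_append] at h
  rw [← h, Nat.cast_add]
  exact add_le_add (edist_le _) (edist_le _)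

theorem toLex_le_toLex_of_add_one_le {ι : Type*} [LinearOrder ι] {a b b' : ℕ∞} {i j : ι}
    (h : toLex (a + 1, i) ≤ toLex (b, j)) (hb : b ≤ b' + 1) : toLex (a, i) ≤ toLex (b', j) := by
  simp only [Prod.Lex.toLex_le_toLex'] at h ⊢
  refine ⟨(WithTop.add_le_add_iff_right ENat.one_ne_top).1 (h.1.trans hb), fun hab => ?_⟩
  exact h.2 (le_antisymm h.1 (hab ▸ hb))

section VoronoiMinor

variable {V : Type} {G : SimpleGraph V} {n : ℕ} {x : Fin n → V} {r : ℕ}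

def voronoiCell (G : SimpleGraph V) (x : Fin n → V) (r : ℕ) (m : Fin n) : Set V :=
  {u | G.edist u (x m) ≤ r ∧ ∀ q, toLex (G.edist u (x m), m) ≤ toLex (G.edist u (x q), q)}

theorem voronoiCell_pairwise_disjoint (x : Fin n → V) (r : ℕ) :
    Pairwise fun m q => Disjoint (voronoiCell G x r m) (voronoiCell G x r q) := by
  intro m q hmq
  refine Set.disjoint_left.2 fun u hum huq => hmq ?_
  exact congrArg Prod.snd (toLex.injective (le_antisymm (hum.2 q) (huq.2 m)))

theorem self_mem_voronoiCell (hx : Function.Injective x) (r : ℕ) (m : Fin n) :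
    x m ∈ voronoiCell G x r m := by
  refine ⟨by simp, fun q => ?_⟩
  rcases eq_or_ne q m with rfl | hqm
  · exact le_rfl
  · rw [edist_self]
    exact Prod.Lex.toLex_le_toLex.2 (.inl (edist_pos_of_ne (hx.ne hqm.symm)))

theorem exists_adj_mem_voronoiCell {m : Fin n} {u : V} {k : ℕ} (hu : u ∈ voronoiCell G x r m)
    (hk : G.edist u (x m) = k + 1) :
    ∃ z ∈ voronoiCell G x r m, G.Adj u z ∧ G.edist z (x m) = k := by
  obtain ⟨p, hp⟩ := exists_walk_of_edist_eq_coe (k := k + 1) (by exact_mod_cast hk)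
  cases p with
  | nil => simp at hp
  | @cons _ z _ hadj p =>
    have hp : p.length = k := by simpa using hp
    have hz : G.edist z (x m) = k := by
      refine le_antisymm (hp ▸ edist_le p) ?_
      exact (WithTop.add_le_add_iff_right ENat.one_ne_top).1
        (hk ▸ hadj.edist_le_edist_add_one (x m))
    refine ⟨z, ⟨?_, fun q => ?_⟩, hadj, hz⟩
    · exact hz ▸ le_self_add.trans (hk ▸ hu.1)
    · refine toLex_le_toLex_of_add_one_le ?_ (hadj.edist_le_edist_add_one (x q))
      rw [hz, ← hk]
      exact hu.2 q

theorem voronoiCell_hasRadiusLE (hx : Function.Injective x) (r : ℕ) (m : Fin n) :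
    hasRadiusLE G (voronoiCell G x r m) r := by
  refine ⟨⟨x m, self_mem_voronoiCell hx r m⟩, fun ⟨u, hu⟩ => ?_⟩
  suffices h : ∀ k : ℕ, ∀ u (hu : u ∈ voronoiCell G x r m), G.edist u (x m) = k →
      (G.induce (voronoiCell G x r m)).edist ⟨x m, self_mem_voronoiCell hx r m⟩ ⟨u, hu⟩ ≤ k by
    obtain ⟨k, hk⟩ := ENat.ne_top_iff_exists.1 (ne_top_of_le_ne_top (ENat.natCast_ne_top r) hu.1)
    exact (h k u hu hk.symm).trans (hk ▸ hu.1)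
  intro k
  induction k with
  | zero =>
    intro u hu h
    obtain rfl := edist_eq_zero_iff.1 h
    simp
  | succ k ih =>
    intro u hu h
    obtain ⟨z, hz, hadj, hzk⟩ := exists_adj_mem_voronoiCell hu (by exact_mod_cast h)
    have hadj' : (G.induce (voronoiCell G x r m)).Adj ⟨z, hz⟩ ⟨u, hu⟩ := hadj.symm
    calc _ ≤ (G.induce _).edist ⟨x m, _⟩ ⟨z, hz⟩ + (G.induce _).edist ⟨z, hz⟩ ⟨u, hu⟩ :=
          SimpleGraph.edist_triangle
      _ ≤ k + 1 := add_le_add (ih z hz hzk) (edist_eq_one_iff_adj.2 hadj').le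
      _ = ↑(k + 1) := by push_cast; rfl

theorem mem_voronoiCell_union_of_edist_add_edist_le {m m' : Fin n} {w u : V}
    (hw : ∀ k, k ≠ m → k ≠ m' → (r : ℕ∞) < G.edist (x k) w)
    (hu : G.edist (x m) u + G.edist u w ≤ r) :
    u ∈ voronoiCell G x r m ∪ voronoiCell G x r m' := by
  have : Nonempty (Fin n) := ⟨m⟩
  obtain ⟨s, hs⟩ := Finite.exists_min fun q => toLex (G.edist u (x q), q)
  have hsm : G.edist u (x s) ≤ G.edist u (x m) := (Prod.Lex.toLex_le_toLex'.1 (hs m)).1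
  rw [edist_comm] at hu
  have hmem : u ∈ voronoiCell G x r s := ⟨hsm.trans (le_self_add.trans hu), hs⟩
  by_cases hsm' : s = m
  · exact .inl (hsm' ▸ hmem)
  by_cases hsm'' : s = m'
  · exact .inr (hsm'' ▸ hmem)
  refine absurd ?_ (hw s hsm' hsm'').not_ge
  calc G.edist (x s) w ≤ G.edist u (x s) + G.edist u w := by
        rw [edist_comm (u := u)]; exact SimpleGraph.edist_triangle
    _ ≤ G.edist u (x m) + G.edist u w := add_le_add_left hsm _
    _ ≤ r := hu

theorem exists_adj_voronoiCell (hx : Function.Injective x) {m m' : Fin n} (hmm' : m ≠ m')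
    {w : V} (hm : G.edist (x m) w ≤ r) (hm' : G.edist (x m') w ≤ r)
    (hw : ∀ k, k ≠ m → k ≠ m' → (r : ℕ∞) < G.edist (x k) w) :
    ∃ a ∈ voronoiCell G x r m, ∃ b ∈ voronoiCell G x r m', G.Adj a b := by
  obtain ⟨p, hp⟩ := exists_walk_of_edist_ne_top (ne_top_of_le_ne_top (ENat.natCast_ne_top r) hm)
  obtain ⟨q, hq⟩ := exists_walk_of_edist_ne_top (ne_top_of_le_ne_top (ENat.natCast_ne_top r) hm')
  have hcover : ∀ u ∈ (p.append q.reverse).support,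
      u ∈ voronoiCell G x r m ∪ voronoiCell G x r m' := by
    intro u hu
    rcases (Walk.mem_support_append_iff _ _).1 hu with hu | hu
    · exact mem_voronoiCell_union_of_edist_add_edist_le hw
        ((p.edist_add_edist_le_length hu).trans (hp ▸ hm))
    · rw [Walk.support_reverse, List.mem_reverse] at hu
      exact Set.union_comm _ _ ▸ mem_voronoiCell_union_of_edist_add_edist_le
        (fun k hk hk' => hw k hk' hk) ((q.edist_add_edist_le_length hu).trans (hq ▸ hm'))
  obtain ⟨d, hd, hd₁, hd₂⟩ := (p.append q.reverse).exists_boundary_dart _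
    (self_mem_voronoiCell hx r m) fun h =>
      Set.disjoint_left.1 (voronoiCell_pairwise_disjoint x r hmm') h
        (self_mem_voronoiCell hx r m')
  exact ⟨d.fst, hd₁, d.snd,
    (hcover _ (Walk.dart_snd_mem_support_of_mem_darts _ hd)).resolve_left hd₂, d.adj⟩

theorem isDepthMinor_completeGraph_of_pair_centres (hx : Function.Injective x)
    (hcentre : ∀ i j, i ≠ j → ∃ w, G.edist (x i) w ≤ r ∧ G.edist (x j) w ≤ r ∧
      ∀ k, k ≠ i → k ≠ j → (r : ℕ∞) < G.edist (x k) w) :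
    IsDepthMinor r (completeGraph (Fin n)) G := by
  refine ⟨voronoiCell G x r, voronoiCell_hasRadiusLE hx r, voronoiCell_pairwise_disjoint x r,
    fun i j hij => ?_⟩
  obtain ⟨w, hi, hj, hk⟩ := hcentre i j hij
  exact exists_adj_voronoiCell hx hij hi hj hk

end VoronoiMinor

theorem VCDimLE.mono {U : Type} {F : Set (Set U)} {d d' : ℕ} (h : VCDimLE F d) (hd : d ≤ d') :
    VCDimLE F d' :=
  fun X hX => (h X hX).trans hd

theorem vcDimLE_balls_of_not_isDepthMinor {V : Type} {G : SimpleGraph V} {r N : ℕ}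
    (hG : ¬ IsDepthMinor r (completeGraph (Fin N)) G) :
    VCDimLE {S | ∃ v, S = ball G r v} N := by
  intro X hX
  by_contra! hN
  obtain ⟨s, rfl⟩ := (Set.finite_of_ncard_pos (N.zero_le.trans_lt hN)).exists_finset_coe
  rw [Set.ncard_coe_finset] at hN
  let x : Fin N → V := fun i => s.equivFin.symm (Fin.castLE hN.le i)
  have hx : Function.Injective x :=
    Subtype.val_injective.comp (s.equivFin.symm.injective.comp (Fin.castLE_injective _))
  have hxs : ∀ i, x i ∈ s := fun i => (s.equivFin.symm _).2
  refine hG (isDepthMinor_completeGraph_of_pair_centres hx fun i j _ => ?_)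
  obtain ⟨_, ⟨w, rfl⟩, hw⟩ := hX {x i, x j} (Set.insert_subset (hxs i) (by simp [hxs j]))
  have hmem : ∀ k, x k ∈ ball G r w ↔ k = i ∨ k = j := fun k => by
    simpa [hxs k, hx.eq_iff] using congrArg (x k ∈ ·) hw
  exact ⟨w, (hmem i).2 (.inl rfl), (hmem j).2 (.inr rfl),
    fun k hki hkj => lt_of_not_ge fun h => ((hmem k).1 h).elim hki hkj⟩

section Traces

variable {U : Type} {F F₁ F₂ F₃ : Set (Set U)}

open Classical in
noncomputable def traces (F : Set (Set U)) (X : Finset U) : Finset (Finset U) :=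
  X.powerset.filter fun t => ∃ S ∈ F, ↑X ∩ S = (t : Set U)

theorem mem_traces {X t : Finset U} : t ∈ traces F X ↔ ∃ S ∈ F, ↑X ∩ S = (t : Set U) := by
  classical
  refine ⟨fun h => (Finset.mem_filter.1 h).2, fun ⟨S, hS, h⟩ => Finset.mem_filter.2 ⟨?_, S, hS, h⟩⟩
  exact Finset.mem_powerset.2 (Finset.coe_subset.1 (h ▸ Set.inter_subset_left))

theorem traces_eq_powerset {X : Finset U} (h : Shatters F ↑X) : traces F X = X.powerset := by
  ext t
  rw [mem_traces, Finset.mem_powerset]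
  exact ⟨fun ⟨S, _, h⟩ => Finset.coe_subset.1 (h ▸ Set.inter_subset_left),
    fun ht => h _ (Finset.coe_subset.2 ht)⟩

theorem Shatters.of_shatters_traces [DecidableEq U] {X s : Finset U}
    (hs : (traces F X).Shatters s) : Shatters F ↑s := by
  intro Y hY
  obtain ⟨t, rfl⟩ := ((Finset.finite_toSet s).subset hY).exists_finset_coe
  obtain ⟨u, hu, hsu⟩ := hs (Finset.coe_subset.1 hY)
  obtain ⟨S, hS, hXS⟩ := mem_traces.1 hu
  obtain ⟨v, hv, hsv⟩ := hs.exists_superset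
  have hsX : (s : Set U) ⊆ X := by
    obtain ⟨S', -, hXS'⟩ := mem_traces.1 hv
    exact (Finset.coe_subset.2 hsv).trans (hXS' ▸ Set.inter_subset_left)
  refine ⟨S, hS, ?_⟩
  rw [← hsu, Finset.coe_inter, ← hXS, ← Set.inter_assoc, Set.inter_eq_left.2 hsX]

theorem card_traces_le {d : ℕ} (hF : VCDimLE F d) (X : Finset U) :
    #(traces F X) ≤ (d + 1) * (#X + 1) ^ d := by
  classical
  have hshatterer : (traces F X).shatterer ⊆ (Finset.range (d + 1)).biUnion X.powersetCard := by
    intro s hs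
    rw [Finset.mem_shatterer] at hs
    have hcard : #s ≤ d := by simpa using hF _ (Shatters.of_shatters_traces hs)
    obtain ⟨t, ht, hst⟩ := hs.exists_superset
    have hsX : s ⊆ X := hst.trans (Finset.mem_powerset.1 (Finset.mem_filter.1 ht).1)
    exact Finset.mem_biUnion.2
      ⟨#s, Finset.mem_range.2 (by omega), Finset.mem_powersetCard.2 ⟨hsX, rfl⟩⟩
  calc #(traces F X) ≤ #(traces F X).shatterer := Finset.card_le_card_shatterer _
    _ ≤ ∑ i ∈ Finset.range (d + 1), #(X.powersetCard i) :=
        (Finset.card_le_card hshatterer).trans Finset.card_biUnion_le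
    _ ≤ ∑ _i ∈ Finset.range (d + 1), (#X + 1) ^ d := by
        refine Finset.sum_le_sum fun i hi => ?_
        rw [Finset.card_powersetCard]
        calc (#X).choose i ≤ #X ^ i := Nat.choose_le_pow _ _
          _ ≤ (#X + 1) ^ i := Nat.pow_le_pow_left (by omega) _
          _ ≤ (#X + 1) ^ d :=
            Nat.pow_le_pow_right (by omega) (by simpa [Nat.lt_succ_iff] using hi)
    _ = (d + 1) * (#X + 1) ^ d := by simp

theorem traces_subset_image_sdiff_union [DecidableEq U]
    (hF : ∀ S ∈ F, ∃ A ∈ F₁, ∃ B ∈ F₂, ∃ C ∈ F₃, S = A \ B ∪ C) (X : Finset U) :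
    traces F X ⊆ (traces F₁ X ×ˢ traces F₂ X ×ˢ traces F₃ X).image
      fun p => p.1 \ p.2.1 ∪ p.2.2 := by
  classical
  intro t ht
  obtain ⟨S, hS, hXS⟩ := mem_traces.1 ht
  obtain ⟨A, hA, B, hB, C, hC, rfl⟩ := hF S hS
  have htrace : ∀ {F' : Set (Set U)} {S'}, S' ∈ F' → X.filter (· ∈ S') ∈ traces F' X :=
    fun hS' => mem_traces.2 ⟨_, hS', by rw [Finset.coe_filter]; rfl⟩
  refine Finset.mem_image.2 ⟨(X.filter (· ∈ A), X.filter (· ∈ B), X.filter (· ∈ C)),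
    Finset.mem_product.2 ⟨htrace hA, Finset.mem_product.2 ⟨htrace hB, htrace hC⟩⟩, ?_⟩
  rw [← Finset.coe_inj, ← hXS]
  ext u
  simp only [Finset.coe_union, Finset.coe_sdiff, Finset.coe_filter, Set.mem_union, Set.mem_sdiff,
    Set.mem_ofPred_eq, Set.mem_inter_iff, Finset.mem_coe]
  tauto

theorem VCDimLE.of_forall_eq_sdiff_union {d₁ d₂ d₃ N : ℕ}
    (h₁ : VCDimLE F₁ d₁) (h₂ : VCDimLE F₂ d₂) (h₃ : VCDimLE F₃ d₃)
    (hF : ∀ S ∈ F, ∃ A ∈ F₁, ∃ B ∈ F₂, ∃ C ∈ F₃, S = A \ B ∪ C)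
    (hN : ∀ n ≥ N, (d₁ + 1) * (d₂ + 1) * (d₃ + 1) * (n + 1) ^ (d₁ + d₂ + d₃) < 2 ^ n) :
    VCDimLE F N := by
  classical
  intro X hX
  by_contra! hXN
  obtain ⟨s, rfl⟩ := (Set.finite_of_ncard_pos (N.zero_le.trans_lt hXN)).exists_finset_coe
  rw [Set.ncard_coe_finset] at hXN
  refine (hN #s hXN.le).not_ge ?_
  calc 2 ^ #s = #(traces F s) := by rw [traces_eq_powerset hX, Finset.card_powerset]
    _ ≤ #(traces F₁ s) * (#(traces F₂ s) * #(traces F₃ s)) := by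
        rw [← Finset.card_product, ← Finset.card_product]
        exact (Finset.card_le_card (traces_subset_image_sdiff_union hF s)).trans
          Finset.card_image_le
    _ ≤ (d₁ + 1) * (#s + 1) ^ d₁ * ((d₂ + 1) * (#s + 1) ^ d₂ * ((d₃ + 1) * (#s + 1) ^ d₃)) := by
        gcongr <;> apply card_traces_le <;> assumption
    _ = (d₁ + 1) * (d₂ + 1) * (d₃ + 1) * (#s + 1) ^ (d₁ + d₂ + d₃) := by ring

theorem vcDimLE_singletons : VCDimLE {S : Set U | ∃ v, S = {v}} 1 := by
  intro X hX
  obtain ⟨_, ⟨v, rfl⟩, hXv⟩ := hX X subset_rfl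
  calc X.ncard ≤ ({v} : Set U).ncard := Set.ncard_le_ncard (Set.inter_eq_left.1 hXv)
    _ = 1 := Set.ncard_singleton v

end Traces

theorem eventually_mul_pow_lt_two_pow (K E : ℕ) :
    ∀ᶠ n : ℕ in atTop, K * (n + 1) ^ E < 2 ^ n := by
  have h := ((tendsto_pow_const_div_const_pow_of_one_lt E one_lt_two).comp
    (tendsto_add_atTop_nat 1)).const_mul (2 * K : ℝ)
  rw [mul_zero] at h
  filter_upwards [h.eventually (gt_mem_nhds one_pos)] with n hn
  simp only [Function.comp, Nat.cast_add, Nat.cast_one, pow_succ] at hn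
  have : (K : ℝ) * (n + 1) ^ E < 2 ^ n := by
    rw [← mul_div_assoc, div_lt_one (by positivity)] at hn
    linarith
  exact_mod_cast this

/-- For `r = 0` both sides are `{v}`, as `r - 1` truncates to `0`. -/
theorem insert_sphere_eq_ball_sdiff_ball_union {V : Type} (G : SimpleGraph V) (r : ℕ) (v : V) :
    insert v {u | G.edist u v = r} = ball G r v \ ball G (r - 1) v ∪ {v} := by
  ext u
  rcases eq_or_ne u v with rfl | huv
  · simp
  have hpos := G.edist_pos_of_ne huv
  simp only [Set.mem_insert_iff, huv, Set.mem_ofPred_eq, false_or, Set.mem_union, Set.mem_sdiff,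
    _root_.ball, Set.mem_singleton_iff, or_false]
  cases h : G.edist u v with
  | top => simp
  | coe k =>
    rw [h] at hpos
    have : 0 < k := by exact_mod_cast hpos
    norm_cast
    omega

/-- Over a nowhere dense class, both the family of closed `r`-balls and the
family of exact-distance-`r` spheres with their centers have bounded VC-dimension. -/
theorem vc_dimension_balls_and_spheres_of_nowhereDense
    (C : Set FinGraph) (hC : NowhereDense C) (r : ℕ) :
    ∃ c : ℕ, ∀ G ∈ C,
      VCDimLE {S : Set G.V | ∃ v : G.V, S = ball G.graph r v} c ∧
      VCDimLE {S : Set G.V | ∃ v : G.V,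
        S = insert v {u : G.V | G.graph.edist u v = (r : ℕ∞)}} c := by
  obtain ⟨f, hf⟩ := hC
  obtain ⟨N, hN⟩ := eventually_atTop.1 <|
    eventually_mul_pow_lt_two_pow ((f r + 1) * (f (r - 1) + 1) * (1 + 1)) (f r + f (r - 1) + 1)
  refine ⟨max (f r) N, fun G hG => ⟨?_, ?_⟩⟩
  · exact (vcDimLE_balls_of_not_isDepthMinor (hf r G hG)).mono (le_max_left _ _)
  · refine (VCDimLE.of_forall_eq_sdiff_union (vcDimLE_balls_of_not_isDepthMinor (hf r G hG))
      (vcDimLE_balls_of_not_isDepthMinor (hf (r - 1) G hG)) vcDimLE_singletons ?_ hN).mono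
      (le_max_right _ _)
    rintro _ ⟨v, rfl⟩
    exact ⟨_, ⟨v, rfl⟩, _, ⟨v, rfl⟩, _, ⟨v, rfl⟩, insert_sphere_eq_ball_sdiff_ball_union _ r v⟩
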